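/- Let G_1 and G_2 be vertex-disjoint graphs with list-size functions f_1, f_2, and let G = G_1 ∪ G_2 (disjoint union) with f = f_1 ∪ f_2. Then m_c(G, f) = m_c(G_1, f_1) · m_c(G_2, f_2). -/

import Mathlib

/-!
Call the set of colours used by a proper colouring of `G` from lists `L` a palette of `L`.
A vertex of `K̄_m` in `G ⊕ K̄_m` sees all of `G` and has a list of `|V(G)|` colours, so it is
blocked by a colouring of `G` exactly when its list is that colouring's palette. Hence
`m_c(G, f)` is the least number of palettes of an assignment `L` of sizes `f` all of whose
palettes have `|V(G)|` colours. The palettes of `G₁ ∪ G₂` are the unions `R ∪ Q` of palettes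
of the two parts; the size condition forces `R` and `Q` to be disjoint, so `(R, Q) ↦ R ∪ Q`
is injective and the counts multiply. Conversely, shifting the colours of an optimal
assignment for `G₂` away from those of one for `G₁` keeps all unions disjoint.
-/

/-- A graph `G` with list sizes `f` is `f`-choosable if for every assignment `L` of lists
of colours with `|L v| = f v` for all `v`, there is a proper colouring of `G` choosing
each vertex's colour from its list. -/
def Choosable {V : Type*} (G : SimpleGraph V) (f : V → ℕ) : Prop :=
  ∀ L : V → Finset ℕ, (∀ v, (L v).card = f v) →
    ∃ c : V → ℕ, (∀ v, c v ∈ L v) ∧ ∀ ⦃u v⦄, G.Adj u v → c u ≠ c v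

/-- The join `G ⊕ K̄_m` of a graph `G` with the edgeless graph on `m` vertices. -/
def joinK {V : Type*} (G : SimpleGraph V) (m : ℕ) : SimpleGraph (V ⊕ Fin m) where
  Adj a b :=
    match a, b with
    | Sum.inl u, Sum.inl v => G.Adj u v
    | Sum.inl _, Sum.inr _ => True
    | Sum.inr _, Sum.inl _ => True
    | Sum.inr _, Sum.inr _ => False
  symm := by
    constructor
    rintro (u | i) (v | j) h
    · exact G.adj_symm h
    · trivial
    · trivial
    · exact h
  loopless := by
    constructor
    rintro (u | i) h
    · exact G.irrefl h
    · exact h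

/-- `m_c(G, f)`: the least `m` such that the join `G ⊕ K̄_m`, with list sizes `f` on `G`
and `|V(G)|` on each of the `m` new vertices, is not choosable. -/
noncomputable def mc {V : Type*} [Fintype V] (G : SimpleGraph V) (f : V → ℕ) : ℕ :=
  sInf {m | ¬ Choosable (joinK G m) (Sum.elim f fun _ => Fintype.card V)}

open Finset Function

theorem Finset.card_eq_and_disjoint_of_card_union_eq {α : Type*} [DecidableEq α]
    {s t : Finset α} {a b : ℕ} (hs : s.card ≤ a) (ht : t.card ≤ b)
    (h : (s ∪ t).card = a + b) : s.card = a ∧ t.card = b ∧ Disjoint s t := by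
  have := card_union_add_card_inter s t
  have hst : (s ∩ t).card = 0 := by omega
  exact ⟨by omega, by omega, disjoint_iff_inter_eq_empty.2 (card_eq_zero.1 hst)⟩

theorem Finset.injOn_union_of_disjoint {α : Type*} [DecidableEq α] {P Q : Set (Finset α)}
    (h : ∀ R ∈ P, ∀ T ∈ Q, Disjoint R T) :
    Set.InjOn (uncurry (· ∪ ·)) (P ×ˢ Q) := by
  rintro ⟨R, T⟩ ⟨hR, hT⟩ ⟨R', T'⟩ ⟨hR', hT'⟩ (he : R ∪ T = R' ∪ T')
  have hl : R ∪ T ⊆ R' ∪ T' := he.le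
  have hr : R' ∪ T' ⊆ R ∪ T := he.ge
  refine Prod.ext (subset_antisymm ?_ ?_) (subset_antisymm ?_ ?_)
  · exact (h R hR T' hT').left_le_of_le_sup_right (subset_union_left.trans hl)
  · exact (h R' hR' T hT).left_le_of_le_sup_right (subset_union_left.trans hr)
  · exact (h R' hR' T hT).symm.left_le_of_le_sup_left (subset_union_right.trans hl)
  · exact (h R hR T' hT').symm.left_le_of_le_sup_left (subset_union_right.trans hr)

theorem Set.exists_fin_cover_of_encard_le {α : Type*} {s : Set α} {m : ℕ} (hs : s.encard ≤ m)
    (a : α) : ∃ S : Fin m → α, s ⊆ Set.range S ∧ ∀ i, S i ∈ insert a s := by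
  have hfin := Set.finite_of_encard_le_coe hs
  set l := hfin.toFinset.toList
  have hlen : l.length ≤ m := by
    rw [Finset.length_toList, ← Set.ncard_eq_toFinset_card _ hfin]
    exact_mod_cast hfin.cast_ncard_eq ▸ hs
  refine ⟨fun i => l.getD i a, fun x hx => ?_, fun i => ?_⟩
  · obtain ⟨j, hj, rfl⟩ :=
      List.mem_iff_getElem.1 (Finset.mem_toList.2 (hfin.mem_toFinset.2 hx))
    exact ⟨⟨j, hj.trans_le hlen⟩, List.getD_eq_getElem _ _ hj⟩
  · show l.getD i a ∈ insert a s
    by_cases hi : (i : ℕ) < l.length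
    · rw [List.getD_eq_getElem _ _ hi]
      exact Or.inr (hfin.mem_toFinset.1 (Finset.mem_toList.1 (List.getElem_mem hi)))
    · rw [List.getD_eq_default _ _ (not_lt.1 hi)]
      exact Or.inl rfl

namespace SimpleGraph

variable {V W : Type*}

def IsListColoring (G : SimpleGraph V) (L : V → Finset ℕ) (c : V → ℕ) : Prop :=
  (∀ v, c v ∈ L v) ∧ ∀ ⦃u v⦄, G.Adj u v → c u ≠ c v

def listPalettes [Fintype V] (G : SimpleGraph V) (L : V → Finset ℕ) : Set (Finset ℕ) :=
  {R | ∃ c, G.IsListColoring L c ∧ univ.image c = R}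

section Palettes

variable [Fintype V] {G : SimpleGraph V} {L : V → Finset ℕ} {R : Finset ℕ}

theorem card_le_of_mem_listPalettes (hR : R ∈ G.listPalettes L) : R.card ≤ Fintype.card V := by
  obtain ⟨c, -, rfl⟩ := hR
  exact card_image_le

theorem subset_biUnion_of_mem_listPalettes (hR : R ∈ G.listPalettes L) :
    R ⊆ univ.biUnion L := by
  obtain ⟨c, hc, rfl⟩ := hR
  intro x hx
  obtain ⟨v, -, rfl⟩ := mem_image.1 hx
  exact mem_biUnion.2 ⟨v, mem_univ v, hc.1 v⟩

theorem listPalettes_finite : (G.listPalettes L).Finite :=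
  (univ.biUnion L).powerset.finite_toSet.subset fun _ hR =>
    mem_powerset.2 (subset_biUnion_of_mem_listPalettes hR)

theorem card_eq_of_mem_listPalettes_of_pairwise_disjoint (hL : Pairwise (Disjoint on L))
    (hR : R ∈ G.listPalettes L) : R.card = Fintype.card V := by
  obtain ⟨c, hc, rfl⟩ := hR
  refine card_image_of_injective _ fun u v huv => by_contra fun hne => ?_
  exact Finset.disjoint_left.1 (hL hne) (hc.1 u) (huv ▸ hc.1 v : c u ∈ L v)

theorem listPalettes_map_subset (G : SimpleGraph V) (L : V → Finset ℕ) (e : ℕ ↪ ℕ) :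
    G.listPalettes (fun v => (L v).map e) ⊆ Finset.map e '' G.listPalettes L := by
  rintro _ ⟨c', hc', rfl⟩
  choose c hc hce using fun v => mem_map.1 (hc'.1 v)
  have hc'e : c' = e ∘ c := funext fun v => (hce v).symm
  subst hc'e
  refine ⟨univ.image c, ⟨c, ⟨hc, fun u v h huv => hc'.2 h (congrArg e huv)⟩, rfl⟩, ?_⟩
  rw [map_eq_image, image_image]

end Palettes

theorem isListColoring_sum_elim_iff {G : SimpleGraph V} {H : SimpleGraph W}
    {L₁ : V → Finset ℕ} {L₂ : W → Finset ℕ} {c₁ : V → ℕ} {c₂ : W → ℕ} :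
    (G ⊕g H).IsListColoring (Sum.elim L₁ L₂) (Sum.elim c₁ c₂) ↔
      G.IsListColoring L₁ c₁ ∧ H.IsListColoring L₂ c₂ := by
  simp only [IsListColoring, Sum.forall, Sum.elim_inl, Sum.elim_inr, sum_adj, false_imp_iff,
    implies_true, and_true, true_and]
  tauto

theorem listPalettes_sum [Fintype V] [Fintype W] (G : SimpleGraph V) (H : SimpleGraph W)
    (L₁ : V → Finset ℕ) (L₂ : W → Finset ℕ) :
    (G ⊕g H).listPalettes (Sum.elim L₁ L₂) =
      Set.image2 (· ∪ ·) (G.listPalettes L₁) (H.listPalettes L₂) := by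
  have himage (c₁ : V → ℕ) (c₂ : W → ℕ) :
      univ.image (Sum.elim c₁ c₂) = univ.image c₁ ∪ univ.image c₂ := by
    ext x
    simp only [mem_image, mem_univ, true_and, Sum.exists, Sum.elim_inl, Sum.elim_inr,
      mem_union]
  ext R
  constructor
  · rintro ⟨c, hc, rfl⟩
    rw [← Sum.elim_comp_inl_inr c, isListColoring_sum_elim_iff] at hc
    rw [← Sum.elim_comp_inl_inr c, himage]
    exact Set.mem_image2_of_mem ⟨_, hc.1, rfl⟩ ⟨_, hc.2, rfl⟩
  · rintro ⟨_, ⟨c₁, hc₁, rfl⟩, _, ⟨c₂, hc₂, rfl⟩, rfl⟩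
    exact ⟨Sum.elim c₁ c₂, isListColoring_sum_elim_iff.2 ⟨hc₁, hc₂⟩, himage ..⟩

end SimpleGraph

open SimpleGraph

theorem exists_isListColoring_joinK_iff {V : Type*} [Fintype V] {G : SimpleGraph V} {m : ℕ}
    {L : V → Finset ℕ} {S : Fin m → Finset ℕ} :
    (∃ c, (joinK G m).IsListColoring (Sum.elim L S) c) ↔
      ∃ R ∈ G.listPalettes L, ∀ i, ¬ S i ⊆ R := by
  constructor
  · rintro ⟨c, hc⟩
    refine ⟨_, ⟨c ∘ Sum.inl, ⟨fun v => hc.1 (.inl v), fun u v h => hc.2 h⟩, rfl⟩,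
      fun i hi => ?_⟩
    obtain ⟨v, -, hv⟩ := mem_image.1 (hi (hc.1 (.inr i)))
    exact hc.2 (show (joinK G m).Adj (.inl v) (.inr i) from trivial) hv
  · rintro ⟨_, ⟨c, hc, rfl⟩, hS⟩
    choose x hxS hx using fun i => not_subset.1 (hS i)
    refine ⟨Sum.elim c x, ?_, ?_⟩
    · rintro (v | i)
      exacts [hc.1 v, hxS i]
    · rintro (u | i) (v | j) h
      · exact hc.2 h
      · exact fun e => hx j (mem_image.2 ⟨u, mem_univ u, e⟩)
      · exact fun e => hx i (mem_image.2 ⟨v, mem_univ v, e.symm⟩)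
      · exact h.elim

theorem not_choosable_joinK_iff {V : Type*} [Fintype V] {G : SimpleGraph V} {f : V → ℕ}
    {m : ℕ} :
    ¬ Choosable (joinK G m) (Sum.elim f fun _ => Fintype.card V) ↔
      ∃ L : V → Finset ℕ, (∀ v, (L v).card = f v) ∧
        (∀ R ∈ G.listPalettes L, R.card = Fintype.card V) ∧
          (G.listPalettes L).encard ≤ m := by
  constructor
  · intro h
    obtain ⟨L', hL', hbad⟩ : ∃ L' : V ⊕ Fin m → Finset ℕ,
        (∀ v, (L' v).card = Sum.elim f (fun _ => Fintype.card V) v) ∧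
          ¬ ∃ c, (joinK G m).IsListColoring L' c := by
      simpa only [Choosable, IsListColoring, not_forall, exists_prop] using h
    rw [← Sum.elim_comp_inl_inr L', exists_isListColoring_joinK_iff] at hbad
    push Not at hbad
    have hrange : ∀ R ∈ G.listPalettes (L' ∘ Sum.inl),
        R ∈ Set.range (fun i => L' (.inr i)) ∧ R.card = Fintype.card V := by
      intro R hR
      obtain ⟨i, hi⟩ := hbad R hR
      have hcard : (L' (.inr i)).card = Fintype.card V := hL' (.inr i)
      have heq := eq_of_subset_of_card_le hi (hcard ▸ card_le_of_mem_listPalettes hR)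
      exact ⟨⟨i, heq⟩, heq ▸ hcard⟩
    refine ⟨L' ∘ Sum.inl, fun v => hL' (.inl v), fun R hR => (hrange R hR).2, ?_⟩
    calc (G.listPalettes (L' ∘ Sum.inl)).encard
        ≤ (Set.range fun i => L' (.inr i)).encard :=
          Set.encard_le_encard fun R hR => (hrange R hR).1
      _ ≤ (Set.univ : Set (Fin m)).encard := by
          rw [← Set.image_univ]; exact Set.encard_image_le _ _
      _ = m := by simp
  · rintro ⟨L, hL, hP, hm⟩ hch
    obtain ⟨S, hPS, hS⟩ := Set.exists_fin_cover_of_encard_le hm (range (Fintype.card V))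
    have hScard (i : Fin m) : (S i).card = Fintype.card V := by
      rcases hS i with h | h
      · rw [h, card_range]
      · exact hP _ h
    obtain ⟨R, hR, hRS⟩ := exists_isListColoring_joinK_iff.1 <|
      hch (Sum.elim L S) fun v => v.rec (fun v => hL v) hScard
    obtain ⟨i, rfl⟩ := hPS hR
    exact hRS i subset_rfl

theorem exists_pairwise_disjoint_card_eq {V : Type*} [Countable V] (f : V → ℕ) :
    ∃ L : V → Finset ℕ, (∀ v, (L v).card = f v) ∧ Pairwise (Disjoint on L) := by
  obtain ⟨e, he⟩ := Countable.exists_injective_nat V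
  refine ⟨fun v => (range (f v)).map ⟨Nat.pair (e v), fun _ _ h => (Nat.pair_eq_pair.1 h).2⟩,
    fun v => by simp, fun u v huv => Finset.disjoint_left.2 fun x hu hv => huv ?_⟩
  obtain ⟨s, -, rfl⟩ := mem_map.1 hu
  obtain ⟨t, -, hts⟩ := mem_map.1 hv
  exact he (Nat.pair_eq_pair.1 hts).1.symm

section mc

variable {V : Type*} [Fintype V] {G : SimpleGraph V} {f : V → ℕ}

theorem exists_not_choosable_joinK (G : SimpleGraph V) (f : V → ℕ) :
    ∃ m, ¬ Choosable (joinK G m) (Sum.elim f fun _ => Fintype.card V) := by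
  obtain ⟨L, hL, hdisj⟩ := exists_pairwise_disjoint_card_eq f
  exact ⟨_, not_choosable_joinK_iff.2 ⟨L, hL,
    fun _ => card_eq_of_mem_listPalettes_of_pairwise_disjoint hdisj,
    listPalettes_finite.cast_ncard_eq.ge⟩⟩

theorem exists_listPalettes_encard_le_mc (G : SimpleGraph V) (f : V → ℕ) :
    ∃ L : V → Finset ℕ, (∀ v, (L v).card = f v) ∧
      (∀ R ∈ G.listPalettes L, R.card = Fintype.card V) ∧
        (G.listPalettes L).encard ≤ mc G f :=
  not_choosable_joinK_iff.1 (Nat.sInf_mem (exists_not_choosable_joinK G f))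

theorem mc_le_of_listPalettes_encard_le {L : V → Finset ℕ} {m : ℕ}
    (hL : ∀ v, (L v).card = f v) (hP : ∀ R ∈ G.listPalettes L, R.card = Fintype.card V)
    (hm : (G.listPalettes L).encard ≤ m) : mc G f ≤ m :=
  Nat.sInf_le (not_choosable_joinK_iff.2 ⟨L, hL, hP, hm⟩)

theorem mc_eq_zero_of_listPalettes_eq_empty {L : V → Finset ℕ} (hL : ∀ v, (L v).card = f v)
    (h : G.listPalettes L = ∅) : mc G f = 0 :=
  Nat.le_zero.1 <| mc_le_of_listPalettes_encard_le hL (by simp [h]) (by simp [h])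

theorem mc_le_listPalettes_encard {L : V → Finset ℕ} (hL : ∀ v, (L v).card = f v)
    (hP : ∀ R ∈ G.listPalettes L, R.card = Fintype.card V) :
    (mc G f : ℕ∞) ≤ (G.listPalettes L).encard := by
  rw [← listPalettes_finite.cast_ncard_eq]
  exact_mod_cast mc_le_of_listPalettes_encard_le hL hP listPalettes_finite.cast_ncard_eq.ge

end mc

section sum

variable {V W : Type*} [Fintype V] [Fintype W]

theorem mc_sum_le_mul (G : SimpleGraph V) (H : SimpleGraph W) (f₁ : V → ℕ)
    (f₂ : W → ℕ) : mc (G ⊕g H) (Sum.elim f₁ f₂) ≤ mc G f₁ * mc H f₂ := by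
  obtain ⟨L₁, hL₁, hP₁, hm₁⟩ := exists_listPalettes_encard_le_mc G f₁
  obtain ⟨L₂, hL₂, hP₂, hm₂⟩ := exists_listPalettes_encard_le_mc H f₂
  set N := (univ.biUnion L₁).sup id + 1
  set e := addRightEmbedding N
  have hshift := listPalettes_map_subset H L₂ e
  have hdisj : ∀ R ∈ G.listPalettes L₁, ∀ Q : Finset ℕ, Disjoint R (Q.map e) :=
    fun R hR Q => Finset.disjoint_left.2 fun x hxR hxQ => by
      have := le_sup (f := id) (subset_biUnion_of_mem_listPalettes hR hxR)
      obtain ⟨y, -, rfl⟩ := mem_map.1 hxQ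
      simp only [e, addRightEmbedding_apply, id] at this
      omega
  refine mc_le_of_listPalettes_encard_le (L := Sum.elim L₁ fun w => (L₂ w).map e) ?_ ?_ ?_
  · rintro (v | w)
    · exact hL₁ v
    · simpa using hL₂ w
  · rw [listPalettes_sum]
    rintro _ ⟨R, hR, _, hT, rfl⟩
    obtain ⟨Q, hQ, rfl⟩ := hshift hT
    rw [card_union_of_disjoint (hdisj R hR Q), card_map, hP₁ R hR, hP₂ Q hQ, Fintype.card_sum]
  · rw [listPalettes_sum, ← Set.image_uncurry_prod, Nat.cast_mul]
    calc _ ≤ _ := Set.encard_image_le _ _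
      _ = _ := Set.encard_prod
      _ ≤ _ := mul_le_mul' hm₁
          ((Set.encard_le_encard hshift).trans ((Set.encard_image_le _ _).trans hm₂))

theorem mul_le_mc_sum (G : SimpleGraph V) (H : SimpleGraph W) (f₁ : V → ℕ)
    (f₂ : W → ℕ) : mc G f₁ * mc H f₂ ≤ mc (G ⊕g H) (Sum.elim f₁ f₂) := by
  obtain ⟨L, hL, hP, hm⟩ := exists_listPalettes_encard_le_mc (G ⊕g H) (Sum.elim f₁ f₂)
  rw [← Sum.elim_comp_inl_inr L, listPalettes_sum] at hP hm
  set L₁ := L ∘ Sum.inl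
  set L₂ := L ∘ Sum.inr
  have hL₁ (v : V) : (L₁ v).card = f₁ v := hL (.inl v)
  have hL₂ (w : W) : (L₂ w).card = f₂ w := hL (.inr w)
  set P₁ := G.listPalettes L₁
  set P₂ := H.listPalettes L₂
  rcases P₁.eq_empty_or_nonempty with h₁ | ⟨R₀, hR₀⟩
  · simp [mc_eq_zero_of_listPalettes_eq_empty hL₁ h₁]
  rcases P₂.eq_empty_or_nonempty with h₂ | ⟨Q₀, hQ₀⟩
  · simp [mc_eq_zero_of_listPalettes_eq_empty hL₂ h₂]
  have hsplit (R : Finset ℕ) (hR : R ∈ P₁) (Q : Finset ℕ) (hQ : Q ∈ P₂) :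
      R.card = Fintype.card V ∧ Q.card = Fintype.card W ∧ Disjoint R Q :=
    card_eq_and_disjoint_of_card_union_eq (card_le_of_mem_listPalettes hR)
      (card_le_of_mem_listPalettes hQ) <| by
        rw [hP _ (Set.mem_image2_of_mem hR hQ), Fintype.card_sum]
  have hm₁ := mc_le_listPalettes_encard hL₁ fun R hR => (hsplit R hR Q₀ hQ₀).1
  have hm₂ := mc_le_listPalettes_encard hL₂ fun Q hQ => (hsplit R₀ hR₀ Q hQ).2.1
  suffices ((mc G f₁ * mc H f₂ : ℕ) : ℕ∞) ≤ mc (G ⊕g H) (Sum.elim f₁ f₂) by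
    exact_mod_cast this
  calc ((mc G f₁ * mc H f₂ : ℕ) : ℕ∞) ≤ P₁.encard * P₂.encard := by
        rw [Nat.cast_mul]; exact mul_le_mul' hm₁ hm₂
    _ = (Set.image2 (· ∪ ·) P₁ P₂).encard := by
        rw [← Set.image_uncurry_prod, (injOn_union_of_disjoint
          fun R hR Q hQ => (hsplit R hR Q hQ).2.2).encard_image, Set.encard_prod]
    _ ≤ _ := hm

end sum

theorem stmt_11_general {V₁ V₂ : Type*} [Fintype V₁] [Fintype V₂]
    (G₁ : SimpleGraph V₁) (G₂ : SimpleGraph V₂)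
    (f₁ : V₁ → ℕ) (f₂ : V₂ → ℕ) :
    mc (G₁.sum G₂) (Sum.elim f₁ f₂) = mc G₁ f₁ * mc G₂ f₂ :=
  (mc_sum_le_mul G₁ G₂ f₁ f₂).antisymm (mul_le_mc_sum G₁ G₂ f₁ f₂)

/-- `m_c(G₁ ∪ G₂, f₁ ∪ f₂) = m_c(G₁, f₁) · m_c(G₂, f₂)` for vertex-disjoint graphs. -/
theorem stmt_11 {V₁ V₂ : Type*} [Fintype V₁] [Fintype V₂]
    (G₁ : SimpleGraph V₁) (G₂ : SimpleGraph V₂)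
    (f₁ : V₁ → ℕ) (f₂ : V₂ → ℕ) (hf₁ : ∀ v, 0 < f₁ v) (hf₂ : ∀ v, 0 < f₂ v) :
    mc (G₁.sum G₂) (Sum.elim f₁ f₂) = mc G₁ f₁ * mc G₂ f₂ :=
  stmt_11_general G₁ G₂ f₁ f₂
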